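/- Let G_n be a sequence of finite graphs converging in the local weak (Benjamini–Schramm) sense to a locally finite random rooted graph, and let H_n be (possibly random) graphs on the same vertex sets. Suppose there exist t_n = o(|V(G_n)|) such that P(|E(G_n) △ E(H_n)| ≤ t_n) → 1, where △ denotes symmetric difference of edge sets. Then H_n converges locally to the same limit as G_n. -/

import Mathlib

open MeasureTheory Filter Finset

noncomputable section

set_option linter.unusedSectionVars false

namespace WSTPaper

variable {V : Type} [Fintype V] [DecidableEq V]

/-- The ball of radius `r` around `x` in `G`, as a set of vertices. -/
def ballSet (G : SimpleGraph V) (x : V) (r : ℕ) : Set V :=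
  {y | G.Reachable x y ∧ G.dist x y ≤ r}

lemma mem_ballSet_self (G : SimpleGraph V) (x : V) (r : ℕ) : x ∈ ballSet G x r :=
  ⟨SimpleGraph.Reachable.refl x, by simp [SimpleGraph.dist_self]⟩

/-- The `r`-ball of `G` around `x` is rooted-isomorphic to the rooted graph `(H, w)`. -/
def BallIso (G : SimpleGraph V) (x : V) (r : ℕ) {W : Type} (H : SimpleGraph W) (w : W) : Prop :=
  ∃ φ : SimpleGraph.induce (ballSet G x r) G ≃g H, φ ⟨x, mem_ballSet_self G x r⟩ = w

open scoped Classical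

/-- The fraction of vertices `x` of `G` whose `r`-ball is rooted-isomorphic to `(H, w)`,
i.e. `P(B_G(X, r) ≅ (H, w))` for a uniform random vertex `X`. -/
def ballFrac (G : SimpleGraph V) (r : ℕ) {W : Type} (H : SimpleGraph W) (w : W) : ℝ :=
  (Fintype.card V : ℝ)⁻¹ * ∑ x : V, if BallIso G x r H w then (1:ℝ) else 0

/-- The fraction of vertices `x` of `G` whose `r`-ball has more than `M` vertices. -/
def bigBallFrac (G : SimpleGraph V) (r M : ℕ) : ℝ :=
  (Fintype.card V : ℝ)⁻¹ * ∑ x : V, if M < (ballSet G x r).ncard then (1:ℝ) else 0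

/-- We equip the (finite) type of simple graphs on a fixed vertex set with the discrete
σ-algebra, so that random graphs are simply measurable maps. -/
instance (W : Type) : MeasurableSpace (SimpleGraph W) := ⊤

/-- goodness of a vertex: no symmetric-difference edge is near `x`. -/
def Good (G G' : SimpleGraph V) (x : V) (r : ℕ) : Prop :=
  ∀ a b : V, s(a,b) ∈ symmDiff G.edgeSet G'.edgeSet →
    a ∉ ballSet G x (r-1) ∧ ¬(a ∈ ballSet G x r ∧ b ∈ ballSet G x r)

lemma ballSet_mono (G : SimpleGraph V) (x : V) {r₁ r₂ : ℕ} (h : r₁ ≤ r₂) :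
    ballSet G x r₁ ⊆ ballSet G x r₂ := fun y hy => ⟨hy.1, le_trans hy.2 h⟩

lemma mem_ballSet_symm (G : SimpleGraph V) {x y : V} {r : ℕ} :
    y ∈ ballSet G x r ↔ x ∈ ballSet G y r := by
  unfold ballSet
  constructor <;> rintro ⟨h1, h2⟩ <;>
    exact ⟨h1.symm, by rwa [SimpleGraph.dist_comm]⟩

lemma mem_ballSet_trans (G : SimpleGraph V) {x a y : V} {r₁ r₂ : ℕ}
    (ha : a ∈ ballSet G x r₁) (hy : y ∈ ballSet G a r₂) : y ∈ ballSet G x (r₁ + r₂) := by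
  obtain ⟨p, hp⟩ := ha.1.exists_walk_length_eq_dist
  obtain ⟨q, hq⟩ := hy.1.exists_walk_length_eq_dist
  refine ⟨ha.1.trans hy.1, ?_⟩
  calc G.dist x y ≤ (p.append q).length := SimpleGraph.dist_le _
    _ = p.length + q.length := SimpleGraph.Walk.length_append _ _
    _ ≤ r₁ + r₂ := by rw [hp, hq]; exact Nat.add_le_add ha.2 hy.2

lemma claim1 (G G' : SimpleGraph V) (x : V) (r : ℕ) (hg : Good G G' x r) :
    ∀ {y z : V} (p : G.Walk y z), G.Reachable x y → G.dist x y + p.length ≤ r →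
      ∀ e ∈ p.edges, e ∉ symmDiff G.edgeSet G'.edgeSet := by
  intro y z p
  induction p with
  | nil => intro _ _ e he; simp at he
  | @cons u v w h q ih =>
    intro hxu hlen e he
    rw [SimpleGraph.Walk.length_cons] at hlen
    have hdu : G.dist x u ≤ r - 1 := by omega
    have hsd_uv : s(u,v) ∉ symmDiff G.edgeSet G'.edgeSet := fun hmem =>
      (hg u v hmem).1 ⟨hxu, hdu⟩
    have hxv : G.Reachable x v := hxu.trans h.reachable
    have h1 : G.dist x v ≤ G.dist x u + 1 := by
      obtain ⟨pw, hpw⟩ := hxu.exists_walk_length_eq_dist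
      have := SimpleGraph.dist_le (pw.concat h)
      rwa [SimpleGraph.Walk.length_concat, hpw] at this
    rw [SimpleGraph.Walk.edges_cons] at he
    rcases List.mem_cons.mp he with rfl | he
    · exact hsd_uv
    · exact ih hxv (by omega) e he

lemma claim2 (G G' : SimpleGraph V) (x : V) (r : ℕ) (hg : Good G G' x r) :
    ∀ {y z : V} (p : G'.Walk y z) (q : G.Walk x y),
      q.length + p.length ≤ r →
      ∀ e ∈ p.edges, e ∉ symmDiff G.edgeSet G'.edgeSet := by
  intro y z p
  induction p with
  | nil => intro _ _ e he; simp at he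
  | @cons u v w h q' ih =>
    intro q hlen e he
    rw [SimpleGraph.Walk.length_cons] at hlen
    have hxu : G.Reachable x u := ⟨q⟩
    have hdu : G.dist x u ≤ r - 1 :=
      le_trans (SimpleGraph.dist_le q) (by omega)
    have hsd_uv : s(u,v) ∉ symmDiff G.edgeSet G'.edgeSet := fun hmem =>
      (hg u v hmem).1 ⟨hxu, hdu⟩
    have hG : G.Adj u v := by
      by_contra hc
      exact hsd_uv (Set.mem_symmDiff.mpr (Or.inr ⟨h, by simpa [SimpleGraph.mem_edgeSet] using hc⟩))
    rw [SimpleGraph.Walk.edges_cons] at he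
    rcases List.mem_cons.mp he with rfl | he
    · exact hsd_uv
    · exact ih (q.concat hG) (by rw [SimpleGraph.Walk.length_concat]; omega) e he

lemma ballSet_eq_of_good {G G' : SimpleGraph V} {x : V} {r : ℕ} (hg : Good G G' x r) :
    ballSet G x r = ballSet G' x r := by
  ext y
  constructor
  · rintro ⟨hre, hd⟩
    obtain ⟨p, hp⟩ := hre.exists_walk_length_eq_dist
    have hcom : ∀ e ∈ p.edges, e ∈ G'.edgeSet := by
      intro e he
      have hnsd := claim1 G G' x r hg p (SimpleGraph.Reachable.refl x)
        (by rw [SimpleGraph.dist_self, hp]; simpa using hd) e he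
      have heG : e ∈ G.edgeSet := p.edges_subset_edgeSet he
      by_contra hc
      exact hnsd (Set.mem_symmDiff.mpr (Or.inl ⟨heG, hc⟩))
    refine ⟨⟨p.transfer G' hcom⟩, ?_⟩
    calc G'.dist x y ≤ (p.transfer G' hcom).length := SimpleGraph.dist_le _
      _ = p.length := SimpleGraph.Walk.length_transfer _ _
      _ ≤ r := by rw [hp]; exact hd
  · rintro ⟨hre, hd⟩
    obtain ⟨p, hp⟩ := hre.exists_walk_length_eq_dist
    have hcom : ∀ e ∈ p.edges, e ∈ G.edgeSet := by
      intro e he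
      have hnsd := claim2 G G' x r hg p SimpleGraph.Walk.nil
        (by rw [SimpleGraph.Walk.length_nil, hp]; simpa using hd) e he
      have heG' : e ∈ G'.edgeSet := p.edges_subset_edgeSet he
      by_contra hc
      exact hnsd (Set.mem_symmDiff.mpr (Or.inr ⟨heG', hc⟩))
    refine ⟨⟨p.transfer G hcom⟩, ?_⟩
    calc G.dist x y ≤ (p.transfer G hcom).length := SimpleGraph.dist_le _
      _ = p.length := SimpleGraph.Walk.length_transfer _ _
      _ ≤ r := by rw [hp]; exact hd

lemma adj_iff_of_good {G G' : SimpleGraph V} {x : V} {r : ℕ} (hg : Good G G' x r)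
    {u v : V} (hu : u ∈ ballSet G x r) (hv : v ∈ ballSet G x r) :
    G.Adj u v ↔ G'.Adj u v := by
  by_contra hne
  have hsd : s(u,v) ∈ symmDiff G.edgeSet G'.edgeSet := by
    rw [Set.mem_symmDiff]
    simp only [SimpleGraph.mem_edgeSet]
    tauto
  exact (hg u v hsd).2 ⟨hu, hv⟩

/-- transporting an induced subgraph along a set equality and an adjacency agreement. -/
def inducedCongr {G G' : SimpleGraph V} {S T : Set V} (hST : S = T)
    (hadj : ∀ a b, a ∈ S → b ∈ S → (G.Adj a b ↔ G'.Adj a b)) :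
    (SimpleGraph.induce S G) ≃g (SimpleGraph.induce T G') where
  toEquiv := Equiv.setCongr hST
  map_rel_iff' := by
    rintro ⟨a, ha⟩ ⟨b, hb⟩
    simp only [Equiv.setCongr_apply, SimpleGraph.comap_adj, Function.Embedding.coe_subtype]
    exact (hadj a b ha hb).symm

lemma ballIso_iff_of_good {G G' : SimpleGraph V} {x : V} {r : ℕ} (hg : Good G G' x r)
    {W : Type} (H : SimpleGraph W) (w : W) :
    BallIso G x r H w ↔ BallIso G' x r H w := by
  have hS : ballSet G x r = ballSet G' x r := ballSet_eq_of_good hg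
  have hadj : ∀ a b, a ∈ ballSet G' x r → b ∈ ballSet G' x r → (G'.Adj a b ↔ G.Adj a b) :=
    fun a b ha hb => (adj_iff_of_good hg (hS ▸ ha) (hS ▸ hb)).symm
  let e : (SimpleGraph.induce (ballSet G' x r) G') ≃g (SimpleGraph.induce (ballSet G x r) G) :=
    inducedCongr hS.symm hadj
  have hex : e ⟨x, mem_ballSet_self G' x r⟩ = ⟨x, mem_ballSet_self G x r⟩ := Subtype.ext rfl
  constructor
  · rintro ⟨φ, hφ⟩
    refine ⟨e.trans φ, ?_⟩
    simpa [RelIso.trans_apply, hex] using hφ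
  · rintro ⟨ψ, hψ⟩
    refine ⟨e.symm.trans ψ, ?_⟩
    have hex' : e.symm ⟨x, mem_ballSet_self G x r⟩ = ⟨x, mem_ballSet_self G' x r⟩ := by
      apply e.injective
      simp [hex]
    simpa [RelIso.trans_apply, hex'] using hψ

lemma ncard_biUnion_le {α β : Type} [Finite β] (k : ℕ) (f : α → Set β) {s : Set α}
    (hs : s.Finite) (h : ∀ a ∈ s, (f a).ncard ≤ k) :
    (⋃ a ∈ s, f a).ncard ≤ s.ncard * k := by
  revert h
  refine Set.Finite.induction_on
    (motive := fun s _ => (∀ a ∈ s, (f a).ncard ≤ k) → (⋃ a ∈ s, f a).ncard ≤ s.ncard * k)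
    s hs ?_ ?_
  · simp
  · intro a s' ha hs' ih h
    rw [Set.biUnion_insert]
    calc (f a ∪ ⋃ x ∈ s', f x).ncard ≤ (f a).ncard + (⋃ x ∈ s', f x).ncard :=
          Set.ncard_union_le _ _
      _ ≤ k + s'.ncard * k := by
          have := ih (fun b hb => h b (Set.mem_insert_of_mem a hb))
          have hk := h a (Set.mem_insert a s')
          omega
      _ = (insert a s').ncard * k := by
          rw [Set.ncard_insert_of_notMem ha hs', Nat.succ_mul]; omega

lemma ncard_T_le (G : SimpleGraph V) (r M : ℕ) (c : V) :
    {x | x ∈ ballSet G c r ∧ (ballSet G c r).ncard ≤ M}.ncard ≤ M := by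
  by_cases h : (ballSet G c r).ncard ≤ M
  · exact le_trans (Set.ncard_le_ncard (fun x hx => hx.1) (Set.toFinite _)) h
  · have : {x | x ∈ ballSet G c r ∧ (ballSet G c r).ncard ≤ M} = ∅ := by
      ext x; simp only [Set.mem_setOf_eq, Set.mem_empty_iff_false, iff_false]
      rintro ⟨_, hc⟩; exact h hc
    simp [this]

lemma ncard_A_le (G : SimpleGraph V) (r M : ℕ) (e : Sym2 V) :
    {x | ∃ c ∈ e, x ∈ ballSet G c r ∧ (ballSet G c r).ncard ≤ M}.ncard ≤ 2 * M := by
  induction e using Sym2.ind with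
  | _ a b =>
    have hsub : {x | ∃ c ∈ s(a,b), x ∈ ballSet G c r ∧ (ballSet G c r).ncard ≤ M} ⊆
        {x | x ∈ ballSet G a r ∧ (ballSet G a r).ncard ≤ M} ∪
        {x | x ∈ ballSet G b r ∧ (ballSet G b r).ncard ≤ M} := by
      rintro x ⟨c, hc, hx⟩
      rw [Sym2.mem_iff] at hc
      rcases hc with rfl | rfl
      · exact Or.inl hx
      · exact Or.inr hx
    calc _ ≤ _ := Set.ncard_le_ncard hsub (Set.toFinite _)
      _ ≤ _ := Set.ncard_union_le _ _
      _ ≤ 2 * M := by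
          have h1 := ncard_T_le G r M a
          have h2 := ncard_T_le G r M b
          omega

lemma bad_subset (G G' : SimpleGraph V) (r M : ℕ) :
    {x | ¬ Good G G' x r} ⊆ {x | M < (ballSet G x (2*r)).ncard} ∪
      ⋃ e ∈ symmDiff G.edgeSet G'.edgeSet,
        {x | ∃ c ∈ e, x ∈ ballSet G c r ∧ (ballSet G c r).ncard ≤ M} := by
  intro x hx
  simp only [Set.mem_setOf_eq] at hx
  rw [Good] at hx; push_neg at hx
  obtain ⟨a, b, hmem, himp⟩ := hx
  have haBr : a ∈ ballSet G x r := by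
    by_cases h : a ∈ ballSet G x (r-1)
    · exact ballSet_mono G x (Nat.sub_le r 1) h
    · exact (himp h).1
  by_cases hbig : M < (ballSet G x (2*r)).ncard
  · exact Or.inl hbig
  · right
    refine Set.mem_biUnion hmem ?_
    have hxa : x ∈ ballSet G a r := mem_ballSet_symm G |>.mp haBr
    have hsub : ballSet G a r ⊆ ballSet G x (2*r) := by
      intro y hy
      have := mem_ballSet_trans G haBr hy
      rwa [← two_mul] at this
    exact ⟨a, Sym2.mem_mk_left a b, hxa,
      le_trans (Set.ncard_le_ncard hsub (Set.toFinite _)) (not_lt.mp hbig)⟩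

lemma bad_ncard_le (G G' : SimpleGraph V) (r M : ℕ) :
    {x | ¬ Good G G' x r}.ncard ≤ {x | M < (ballSet G x (2*r)).ncard}.ncard
      + (symmDiff G.edgeSet G'.edgeSet).ncard * (2*M) := by
  refine le_trans (Set.ncard_le_ncard (bad_subset G G' r M) (Set.toFinite _)) ?_
  refine le_trans (Set.ncard_union_le _ _) ?_
  exact Nat.add_le_add_left
    (ncard_biUnion_le _ _ (Set.toFinite _) (fun e _ => ncard_A_le G r M e)) _

lemma sum_boole_eq_ncard (p : V → Prop) :
    ∑ x : V, (if p x then (1:ℝ) else 0) = {x | p x}.ncard := by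
  rw [Finset.sum_boole]
  norm_cast
  rw [Set.ncard_eq_toFinset_card']
  congr 1
  ext x
  simp

lemma frac_diff (G G' : SimpleGraph V) (r M : ℕ) {W : Type} (H : SimpleGraph W) (w : W) :
    |ballFrac G' r H w - ballFrac G r H w| ≤
      bigBallFrac G (2*r) M + (Fintype.card V : ℝ)⁻¹ *
        (2 * M * (symmDiff G.edgeSet G'.edgeSet).ncard) := by
  have hinv : (0:ℝ) ≤ (Fintype.card V : ℝ)⁻¹ := by positivity
  set U := ⋃ e ∈ symmDiff G.edgeSet G'.edgeSet,
      {x | ∃ c ∈ e, x ∈ ballSet G c r ∧ (ballSet G c r).ncard ≤ M} with hU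
  have hpt : ∀ x ∈ (univ : Finset V),
      |(if BallIso G' x r H w then (1:ℝ) else 0) - (if BallIso G x r H w then (1:ℝ) else 0)|
        ≤ (if M < (ballSet G x (2*r)).ncard then (1:ℝ) else 0)
          + (if x ∈ U then (1:ℝ) else 0) := by
    intro x _
    by_cases hgood : Good G G' x r
    · have heq : (if BallIso G' x r H w then (1:ℝ) else 0)
          = if BallIso G x r H w then (1:ℝ) else 0 :=
        if_congr (ballIso_iff_of_good hgood H w).symm rfl rfl
      rw [heq, sub_self, abs_zero]
      positivity
    · have hx := bad_subset G G' r M (show x ∈ {x | ¬ Good G G' x r} from hgood)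
      have habs : |(if BallIso G' x r H w then (1:ℝ) else 0)
          - (if BallIso G x r H w then (1:ℝ) else 0)| ≤ 1 := by
        split_ifs <;> norm_num
      rcases hx with hb | hu
      · rw [if_pos (show M < (ballSet G x (2*r)).ncard from hb)]
        have : (0:ℝ) ≤ (if x ∈ U then (1:ℝ) else 0) := by positivity
        linarith
      · rw [if_pos hu]
        have : (0:ℝ) ≤ (if M < (ballSet G x (2*r)).ncard then (1:ℝ) else 0) := by positivity
        linarith
  calc |ballFrac G' r H w - ballFrac G r H w|
      = (Fintype.card V : ℝ)⁻¹ * |∑ x : V, ((if BallIso G' x r H w then (1:ℝ) else 0)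
          - (if BallIso G x r H w then (1:ℝ) else 0))| := by
        rw [ballFrac, ballFrac, ← mul_sub, ← Finset.sum_sub_distrib, abs_mul,
          abs_of_nonneg hinv]
    _ ≤ (Fintype.card V : ℝ)⁻¹ * ∑ x : V, |(if BallIso G' x r H w then (1:ℝ) else 0)
          - (if BallIso G x r H w then (1:ℝ) else 0)| := by
        exact mul_le_mul_of_nonneg_left (Finset.abs_sum_le_sum_abs _ _) hinv
    _ ≤ (Fintype.card V : ℝ)⁻¹ * ∑ x : V, ((if M < (ballSet G x (2*r)).ncard then (1:ℝ) else 0)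
          + (if x ∈ U then (1:ℝ) else 0)) := by
        exact mul_le_mul_of_nonneg_left (Finset.sum_le_sum hpt) hinv
    _ = bigBallFrac G (2*r) M + (Fintype.card V : ℝ)⁻¹ * ({x | x ∈ U}.ncard : ℝ) := by
        rw [Finset.sum_add_distrib, mul_add, bigBallFrac, sum_boole_eq_ncard]
    _ ≤ bigBallFrac G (2*r) M + (Fintype.card V : ℝ)⁻¹ *
        (2 * M * (symmDiff G.edgeSet G'.edgeSet).ncard) := by
        gcongr
        have h1 : {x | x ∈ U}.ncard = U.ncard := rfl
        have h2 : U.ncard ≤ (symmDiff G.edgeSet G'.edgeSet).ncard * (2*M) :=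
          ncard_biUnion_le _ _ (Set.toFinite _) (fun e _ => ncard_A_le G r M e)
        rw [h1]
        push_cast
        calc (U.ncard : ℝ) ≤ ((symmDiff G.edgeSet G'.edgeSet).ncard * (2*M) : ℕ) := by
              exact_mod_cast h2
          _ = 2 * M * (symmDiff G.edgeSet G'.edgeSet).ncard := by push_cast; ring

lemma frac_le_one (f : V → ℝ) (h1 : ∀ x, f x ≤ 1) :
    (Fintype.card V : ℝ)⁻¹ * ∑ x : V, f x ≤ 1 := by
  rcases Nat.eq_zero_or_pos (Fintype.card V) with h | h
  · rw [h]; norm_num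
  · have hsum : ∑ x : V, f x ≤ (Fintype.card V : ℝ) := by
      calc ∑ x : V, f x ≤ ∑ _x : V, (1:ℝ) := Finset.sum_le_sum (fun x _ => h1 x)
        _ = (Fintype.card V : ℝ) := by simp
    have hpos : (0:ℝ) < (Fintype.card V : ℝ) := by exact_mod_cast h
    calc (Fintype.card V : ℝ)⁻¹ * ∑ x : V, f x
        ≤ (Fintype.card V : ℝ)⁻¹ * (Fintype.card V : ℝ) :=
          mul_le_mul_of_nonneg_left hsum (by positivity)
      _ = 1 := inv_mul_cancel₀ (ne_of_gt hpos)

lemma ballFrac_nonneg (G : SimpleGraph V) (r : ℕ) {W : Type} (H : SimpleGraph W) (w : W) :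
    0 ≤ ballFrac G r H w := by
  unfold ballFrac
  apply mul_nonneg (by positivity)
  apply Finset.sum_nonneg
  intro x _; positivity

lemma ballFrac_le_one (G : SimpleGraph V) (r : ℕ) {W : Type} (H : SimpleGraph W) (w : W) :
    ballFrac G r H w ≤ 1 :=
  frac_le_one _ (fun x => by split <;> norm_num)

lemma bigBallFrac_nonneg (G : SimpleGraph V) (r M : ℕ) : 0 ≤ bigBallFrac G r M := by
  unfold bigBallFrac
  apply mul_nonneg (by positivity)
  apply Finset.sum_nonneg
  intro x _; positivity

lemma bigBallFrac_le_one (G : SimpleGraph V) (r M : ℕ) : bigBallFrac G r M ≤ 1 :=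
  frac_le_one _ (fun x => by split <;> norm_num)

lemma integrable_of_bound {Ωa : Type} [MeasurableSpace Ωa] (μ : Measure Ωa)
    [IsFiniteMeasure μ] {f : Ωa → ℝ} (hm : Measurable f) (C : ℝ) (h : ∀ ω, |f ω| ≤ C) :
    Integrable f μ :=
  ⟨hm.aestronglyMeasurable,
    HasFiniteIntegral.of_bounded (C := C) (ae_of_all _ (by simpa [Real.norm_eq_abs] using h))⟩

lemma measurable_graph_fun {Ωa W : Type} [MeasurableSpace Ωa] {Gf : Ωa → SimpleGraph W}
    (hG : Measurable Gf) (f : SimpleGraph W → ℝ) : Measurable fun ω => f (Gf ω) :=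
  Measurable.comp (measurable_from_top (f := f)) hG

lemma measurableSet_pair {Ωa W : Type} [MeasurableSpace Ωa] [Fintype W] [DecidableEq W]
    {Gf Hf : Ωa → SimpleGraph W} (hG : Measurable Gf) (hH : Measurable Hf)
    (P : SimpleGraph W → SimpleGraph W → Prop) :
    MeasurableSet {ω | P (Gf ω) (Hf ω)} := by
  have hrw : {ω | P (Gf ω) (Hf ω)} =
      ⋃ g : SimpleGraph W, (Gf ⁻¹' {g}) ∩ (Hf ⁻¹' {h | P g h}) := by
    ext ω; simp
  rw [hrw]
  exact MeasurableSet.iUnion fun g =>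
    (hG MeasurableSpace.measurableSet_top).inter (hH MeasurableSpace.measurableSet_top)

/-- Let `Gₙ` be a sequence of (possibly random) finite graphs converging
in the local weak (Benjamini–Schramm) sense to a locally finite random rooted graph (with
ball-probability limits `L`; local finiteness is expressed by the tightness of the ball
sizes), and let `Hₙ` be (possibly random) graphs on the same vertex sets, defined on the same
probability spaces.  If there are `tₙ = o(|V(Gₙ)|)` with `P(|E(Gₙ) △ E(Hₙ)| ≤ tₙ) → 1`,
then `Hₙ` converges locally to the same limit as `Gₙ`. -/
theorem local_limit_transfer
    (V : ℕ → Type) [∀ n, Fintype (V n)] [∀ n, DecidableEq (V n)]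
    (Ω : ℕ → Type) [∀ n, MeasurableSpace (Ω n)]
    (μ : ∀ n, Measure (Ω n)) (hμ : ∀ n, IsProbabilityMeasure (μ n))
    (Gr Hr : ∀ n, Ω n → SimpleGraph (V n))
    (hGmeas : ∀ n, Measurable (Gr n)) (hHmeas : ∀ n, Measurable (Hr n))
    -- the local limit of Gₙ exists, with ball-probability limits L
    (L : ∀ m : ℕ, SimpleGraph (Fin m) → Fin m → ℕ → ℝ)
    (hG : ∀ (m : ℕ) (H : SimpleGraph (Fin m)) (w : Fin m) (r : ℕ),
      Tendsto (fun n => ∫ ω, ballFrac (Gr n ω) r H w ∂(μ n)) atTop (nhds (L m H w r)))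
    -- the limit is locally finite: the ball sizes of Gₙ are tight
    (htight : ∀ r : ℕ,
      Tendsto (fun M : ℕ => ⨆ n : ℕ, ∫ ω, bigBallFrac (Gr n ω) r M ∂(μ n))
        atTop (nhds 0))
    -- |E(Gₙ) △ E(Hₙ)| ≤ tₙ = o(|V(Gₙ)|) with probability tending to 1
    (t : ℕ → ℝ)
    (ht : t =o[atTop] fun n => (Fintype.card (V n) : ℝ))
    (hdiff : Tendsto (fun n => ((μ n)
        {ω | ((symmDiff (Gr n ω).edgeSet (Hr n ω).edgeSet).ncard : ℝ) ≤ t n}).toReal)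
      atTop (nhds 1)) :
    ∀ (m : ℕ) (H : SimpleGraph (Fin m)) (w : Fin m) (r : ℕ),
      Tendsto (fun n => ∫ ω, ballFrac (Hr n ω) r H w ∂(μ n)) atTop (nhds (L m H w r)) := by
  intro m H w r
  haveI : ∀ n, IsProbabilityMeasure (μ n) := hμ
  -- basic integrability facts
  have hmG : ∀ n, Measurable fun ω => ballFrac (Gr n ω) r H w := fun n =>
    measurable_graph_fun (hGmeas n) (fun g => ballFrac g r H w)
  have hmH : ∀ n, Measurable fun ω => ballFrac (Hr n ω) r H w := fun n =>
    measurable_graph_fun (hHmeas n) (fun g => ballFrac g r H w)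
  have hmBig : ∀ n (M : ℕ), Measurable fun ω => bigBallFrac (Gr n ω) (2*r) M := fun n M =>
    measurable_graph_fun (hGmeas n) (fun g => bigBallFrac g (2*r) M)
  have hiG : ∀ n, Integrable (fun ω => ballFrac (Gr n ω) r H w) (μ n) := fun n =>
    integrable_of_bound _ (hmG n) 1 (fun ω => abs_le.mpr
      ⟨by linarith [ballFrac_nonneg (Gr n ω) r H w], ballFrac_le_one _ _ _ _⟩)
  have hiH : ∀ n, Integrable (fun ω => ballFrac (Hr n ω) r H w) (μ n) := fun n =>
    integrable_of_bound _ (hmH n) 1 (fun ω => abs_le.mpr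
      ⟨by linarith [ballFrac_nonneg (Hr n ω) r H w], ballFrac_le_one _ _ _ _⟩)
  have hiBig : ∀ n (M : ℕ), Integrable (fun ω => bigBallFrac (Gr n ω) (2*r) M) (μ n) :=
    fun n M => integrable_of_bound _ (hmBig n M) 1 (fun ω => abs_le.mpr
      ⟨by linarith [bigBallFrac_nonneg (Gr n ω) (2*r) M], bigBallFrac_le_one _ _ _⟩)
  have hBigInt_le_one : ∀ n (M : ℕ), ∫ ω, bigBallFrac (Gr n ω) (2*r) M ∂(μ n) ≤ 1 := by
    intro n M
    calc ∫ ω, bigBallFrac (Gr n ω) (2*r) M ∂(μ n) ≤ ∫ _ω, (1:ℝ) ∂(μ n) :=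
          integral_mono (hiBig n M) (integrable_const 1)
            (fun ω => bigBallFrac_le_one _ _ _)
      _ = 1 := by simp
  have key : Tendsto (fun n => (∫ ω, ballFrac (Hr n ω) r H w ∂(μ n))
      - ∫ ω, ballFrac (Gr n ω) r H w ∂(μ n)) atTop (nhds 0) := by
    rw [NormedAddCommGroup.tendsto_nhds_zero]
    intro ε hε
    have h3 : (0:ℝ) < ε/3 := by linarith
    obtain ⟨M, hM⟩ := ((htight (2*r)).eventually (eventually_lt_nhds h3)).exists
    have hcpos : (0:ℝ) < ε / (3 * (2*M+1)) := by positivity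
    have hts := ht.def hcpos
    have hprob : ∀ᶠ n in atTop, 1 - ε/3 < ((μ n)
        {ω | ((symmDiff (Gr n ω).edgeSet (Hr n ω).edgeSet).ncard : ℝ) ≤ t n}).toReal :=
      hdiff.eventually (eventually_gt_nhds (by linarith))
    filter_upwards [hts, hprob] with n htn hpn
    set cV : ℝ := (Fintype.card (V n) : ℝ) with hcV
    have hcVnn : 0 ≤ cV := by rw [hcV]; positivity
    set E : Set (Ω n) :=
      {ω | ((symmDiff (Gr n ω).edgeSet (Hr n ω).edgeSet).ncard : ℝ) ≤ t n} with hE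
    have hEmeas : MeasurableSet E :=
      measurableSet_pair (hGmeas n) (hHmeas n)
        (fun g h => ((symmDiff g.edgeSet h.edgeSet).ncard : ℝ) ≤ t n)
    set c' : ℝ := cV⁻¹ * (2 * M * |t n|) with hc'
    have hc'nn : 0 ≤ c' := by rw [hc', hcV]; positivity
    -- pointwise bound
    have hpt : ∀ ω, |ballFrac (Hr n ω) r H w - ballFrac (Gr n ω) r H w| ≤
        bigBallFrac (Gr n ω) (2*r) M + c' + Set.indicator Eᶜ (fun _ => (1:ℝ)) ω := by
      intro ω
      by_cases hω : ω ∈ E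
      · have hind : Set.indicator Eᶜ (fun _ => (1:ℝ)) ω = 0 :=
          Set.indicator_of_notMem (by simpa using hω) _
        rw [hind, add_zero]
        refine le_trans (frac_diff (Gr n ω) (Hr n ω) r M H w) ?_
        have hsd : ((symmDiff (Gr n ω).edgeSet (Hr n ω).edgeSet).ncard : ℝ) ≤ |t n| :=
          le_trans hω (le_abs_self _)
        have : cV⁻¹ * (2 * M * ((symmDiff (Gr n ω).edgeSet (Hr n ω).edgeSet).ncard : ℝ))
            ≤ c' := by
          rw [hc']
          apply mul_le_mul_of_nonneg_left _ (by positivity)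
          apply mul_le_mul_of_nonneg_left hsd (by positivity)
        linarith
      · have hind : Set.indicator Eᶜ (fun _ => (1:ℝ)) ω = 1 :=
          Set.indicator_of_mem (by simpa using hω) _
        rw [hind]
        have h1 : |ballFrac (Hr n ω) r H w - ballFrac (Gr n ω) r H w| ≤ 1 := by
          have := ballFrac_nonneg (Hr n ω) r H w
          have := ballFrac_le_one (Hr n ω) r H w
          have := ballFrac_nonneg (Gr n ω) r H w
          have := ballFrac_le_one (Gr n ω) r H w
          rw [abs_sub_le_iff]; constructor <;> linarith
        have hb := bigBallFrac_nonneg (Gr n ω) (2*r) M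
        linarith
    -- integrate
    have hiInd : Integrable (Set.indicator Eᶜ (fun _ => (1:ℝ))) (μ n) :=
      (integrable_const (1:ℝ)).indicator hEmeas.compl
    have hiRHS : Integrable (fun ω => bigBallFrac (Gr n ω) (2*r) M + c'
        + Set.indicator Eᶜ (fun _ => (1:ℝ)) ω) (μ n) :=
      ((hiBig n M).add (integrable_const c')).add hiInd
    have hstep : ‖(∫ ω, ballFrac (Hr n ω) r H w ∂(μ n))
        - ∫ ω, ballFrac (Gr n ω) r H w ∂(μ n)‖ ≤
        (∫ ω, bigBallFrac (Gr n ω) (2*r) M ∂(μ n)) + c' + ((μ n) Eᶜ).toReal := by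
      rw [← integral_sub (hiH n) (hiG n)]
      calc ‖∫ ω, (ballFrac (Hr n ω) r H w - ballFrac (Gr n ω) r H w) ∂(μ n)‖
          ≤ ∫ ω, ‖ballFrac (Hr n ω) r H w - ballFrac (Gr n ω) r H w‖ ∂(μ n) :=
            norm_integral_le_integral_norm _
        _ ≤ ∫ ω, (bigBallFrac (Gr n ω) (2*r) M + c'
            + Set.indicator Eᶜ (fun _ => (1:ℝ)) ω) ∂(μ n) := by
            refine integral_mono ((hiH n).sub (hiG n)).norm hiRHS ?_
            intro ω
            simpa [Real.norm_eq_abs] using hpt ω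
        _ = (∫ ω, bigBallFrac (Gr n ω) (2*r) M ∂(μ n)) + c' + ((μ n) Eᶜ).toReal := by
            have hiBC : Integrable (fun ω => bigBallFrac (Gr n ω) (2*r) M + c') (μ n) :=
              (hiBig n M).add (integrable_const c')
            rw [integral_add hiBC hiInd, integral_add (hiBig n M) (integrable_const c'),
              integral_const, integral_indicator_const (1:ℝ) hEmeas.compl]
            simp
            rfl
    -- bound the three pieces
    have hA : (∫ ω, bigBallFrac (Gr n ω) (2*r) M ∂(μ n)) < ε/3 := by
      refine lt_of_le_of_lt
        (le_ciSup (f := fun k => ∫ ω, bigBallFrac (Gr k ω) (2*r) M ∂(μ k)) ⟨1, ?_⟩ n) hM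
      rintro _ ⟨k, rfl⟩
      exact hBigInt_le_one k M
    have hB : c' ≤ ε/3 := by
      have h1 : cV⁻¹ * |t n| ≤ ε / (3 * (2*M+1)) := by
        rcases eq_or_lt_of_le hcVnn with h0 | h0
        · rw [← h0]
          simpa using hcpos.le
        · have h2 : |t n| ≤ (ε / (3 * (2*M+1))) * cV := by
            simpa [Real.norm_eq_abs, abs_of_nonneg hcVnn] using htn
          calc cV⁻¹ * |t n| ≤ cV⁻¹ * ((ε / (3 * (2*M+1))) * cV) :=
                mul_le_mul_of_nonneg_left h2 (by positivity)
            _ = ε / (3 * (2*M+1)) := by field_simp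
      have h2M : (0:ℝ) ≤ 2*(M:ℝ) := by positivity
      calc c' = (2*(M:ℝ)) * (cV⁻¹ * |t n|) := by rw [hc']; ring
        _ ≤ (2*(M:ℝ)) * (ε / (3 * (2*M+1))) := mul_le_mul_of_nonneg_left h1 h2M
        _ ≤ ε/3 := by
            rw [mul_div_assoc', div_le_div_iff₀ (by positivity) (by norm_num)]
            nlinarith [hε.le, (Nat.cast_nonneg M : (0:ℝ) ≤ (M:ℝ))]
    have hC : ((μ n) Eᶜ).toReal < ε/3 := by
      have hμE : (μ n) Eᶜ = 1 - (μ n) E := by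
        rw [measure_compl hEmeas (measure_ne_top _ _), measure_univ]
      have hle : (μ n) E ≤ 1 := prob_le_one
      have htr : ((μ n) Eᶜ).toReal = 1 - ((μ n) E).toReal := by
        rw [hμE, ENNReal.toReal_sub_of_le hle ENNReal.one_ne_top, ENNReal.toReal_one]
      rw [htr]
      linarith
    linarith [hstep, hA, hB, hC]
  have := key.add (hG m H w r)
  simpa using this

end WSTPaper
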